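/- arXiv:math/0102117 — 3 statements merged into one kernel-verified Lean document; each statement's English description precedes it below -/
import Mathlib

section
/- For all unit vectors v, w ∈ S¹M: −2D(F) ≤ d_M(b(v), b(w)) − d_{M'}(b(F̃(v)), b(F̃(w))) ≤ 2D(F). -/
open Metric Set Filter

/-- A unit-speed (local) geodesic line in a metric space: locally, distances along the
curve are realized. -/
def IsUnitGeodesic {M : Type*} [MetricSpace M] (c : ℝ → M) : Prop :=
  ∃ ε > 0, ∀ s t : ℝ, |s - t| ≤ ε → dist (c s) (c t) = |s - t|

/-- The unit sphere bundle `S¹M`, modeled as the space of unit-speed geodesics of `M`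
(a geodesic records the basepoint `c 0` together with its direction). -/
def SphereBundle (M : Type*) [MetricSpace M] : Type _ :=
  {c : ℝ → M // IsUnitGeodesic c}

instance {M : Type*} [MetricSpace M] : TopologicalSpace (SphereBundle M) :=
  inferInstanceAs (TopologicalSpace {c : ℝ → M // IsUnitGeodesic c})

/-- The geodesic flow `g_t` on the unit sphere bundle. -/
def geodFlow {M : Type*} [MetricSpace M] (t : ℝ) (c : SphereBundle M) : SphereBundle M :=
  ⟨fun s => c.1 (s + t), by
    obtain ⟨ε, hε, h⟩ := c.2
    refine ⟨ε, hε, fun s s' hss => ?_⟩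
    have : |s + t - (s' + t)| ≤ ε := by simpa [add_sub_add_right_eq_sub] using hss
    simpa [add_sub_add_right_eq_sub] using h (s + t) (s' + t) this⟩

/-- A `C⁰` conjugacy between the geodesic flows of `N` and `N'`. -/
structure FlowConjugacy (N N' : Type*) [MetricSpace N] [MetricSpace N'] where
  F : SphereBundle N → SphereBundle N'
  continuous : Continuous F
  conj : ∀ (t : ℝ) (c : SphereBundle N), F (geodFlow t c) = geodFlow t (F c)

/-- `m` is a midpoint of `y` and `z`. -/
def IsMidpointPt {M : Type*} [MetricSpace M] (y z m : M) : Prop :=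
  dist y m = dist y z / 2 ∧ dist m z = dist y z / 2

/-- The CAT(0) (nonpositive curvature) comparison inequality for a midpoint `m` of `y,z`,
viewed from `x`. -/
def CAT0Comparison {M : Type*} [MetricSpace M] (x y z m : M) : Prop :=
  dist x m ^ 2 ≤ (dist x y ^ 2 + dist x z ^ 2) / 2 - dist y z ^ 2 / 4

/-- `M` is (like) a Hadamard space: it is a geodesic space in which every unit-speed local
geodesic is globally minimizing, and the CAT(0) comparison inequality holds; this encodes
that `M` is a simply connected space of nonpositive curvature. -/
def IsHadamardLike (M : Type*) [MetricSpace M] : Prop :=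
  (∀ x y : M, ∃ c : SphereBundle M, c.1 0 = x ∧ c.1 (dist x y) = y) ∧
  (∀ c : SphereBundle M, ∀ s t : ℝ, dist (c.1 s) (c.1 t) = |s - t|) ∧
  (∀ x y z m : M, IsMidpointPt y z m → CAT0Comparison x y z m)

/-- The action of a group element on the unit sphere bundle (by isometries). -/
def gAct {Γ M : Type*} [Group Γ] [MetricSpace M] [MulAction Γ M] [IsIsometricSMul Γ M]
    (g : Γ) (c : SphereBundle M) : SphereBundle M :=
  ⟨fun t => g • c.1 t, by
    obtain ⟨ε, hε, h⟩ := c.2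
    exact ⟨ε, hε, fun s t hst => by rw [dist_smul]; exact h s t hst⟩⟩

/-- The action of `Γ` on `M` is cocompact (i.e. the quotient `N = M/Γ` is compact). -/
def CocompactAction (Γ M : Type*) [Group Γ] [MetricSpace M] [MulAction Γ M] : Prop :=
  ∃ K : Set M, IsCompact K ∧ (⋃ g : Γ, (fun m => g • m) '' K) = Set.univ

/-- Uniform continuity of a map between unit sphere bundles (distances between unit
vectors are measured by comparing the corresponding geodesics on the time interval
`[-1, 1]`). -/
def UnifContOnSphere {N N' : Type*} [MetricSpace N] [MetricSpace N']
    (F : SphereBundle N → SphereBundle N') : Prop :=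
  ∀ ε > (0:ℝ), ∃ δ > (0:ℝ), ∀ c c' : SphereBundle N,
    (∀ t ∈ Set.Icc (-1:ℝ) 1, dist (c.1 t) (c'.1 t) ≤ δ) →
    ∀ t ∈ Set.Icc (-1:ℝ) 1, dist ((F c).1 t) ((F c').1 t) ≤ ε

/-- The geodesic `c` stays within bounded distance of the geodesic `ν` with the same
parametrization; such `c` are exactly the "vertical" geodesics of `M_ν ≅ X_ν × ℝ`. -/
def ParallelTo {M : Type*} [MetricSpace M] (ν c : SphereBundle M) : Prop :=
  ∃ C : ℝ, ∀ t : ℝ, dist (c.1 t) (ν.1 t) ≤ C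

/-- `M_ν`: the union of all geodesics staying a bounded distance from `ν`. -/
def MSet {M : Type*} [MetricSpace M] (ν : SphereBundle M) : Set M :=
  {x | ∃ c : SphereBundle M, ParallelTo ν c ∧ x ∈ Set.range c.1}

/-- The minimal displacement set `M_γ` of an isometry `γ`. -/
def MinDispSet {Γ : Type*} [Group Γ] (M : Type*) [MetricSpace M] [MulAction Γ M]
    (γ : Γ) : Set M :=
  {m | ∀ x : M, dist m (γ • m) ≤ dist x (γ • x)}

/-- The point of the `ℓ²`-product `X × ℝ` with coordinates `(x, s)`. -/
noncomputable def pmk {X : Type*} [MetricSpace X] (x : X) (s : ℝ) : WithLp 2 (X × ℝ) :=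
  (WithLp.equiv 2 (X × ℝ)).symm (x, s)

theorem FlowConjugacy.basepoint_geodFlow {M M' : Type*} [MetricSpace M] [MetricSpace M']
    (F : FlowConjugacy M M') (t : ℝ) (c : SphereBundle M) :
    (F.F (geodFlow t c)).1 0 = (F.F c).1 t := by
  rw [F.conj]
  exact congrArg (F.F c).1 (zero_add t)

/-- Joining `b v` to `b w` by a geodesic `c` of length `d`, the geodesic `F c` also has length
`d` between times `0` and `d`, since geodesics of `M'` minimize. Its endpoints are the
basepoints of `F c` and of `F (g_d c)`, which lie within `D` of `b (F v)` and `b (F w)`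
respectively because `c`, `v` and `g_d c`, `w` share basepoints. -/
theorem FlowConjugacy.abs_dist_sub_dist_le {M M' : Type*} [MetricSpace M] [MetricSpace M']
    (F : FlowConjugacy M M') (hM : IsHadamardLike M) (hM' : IsHadamardLike M') {D : ℝ}
    (hD : ∀ v w : SphereBundle M, v.1 0 = w.1 0 → dist ((F.F v).1 0) ((F.F w).1 0) ≤ D)
    (v w : SphereBundle M) :
    |dist (v.1 0) (w.1 0) - dist ((F.F v).1 0) ((F.F w).1 0)| ≤ 2 * D := by
  set d := dist (v.1 0) (w.1 0)
  obtain ⟨c, hc0, hcd⟩ := hM.1 (v.1 0) (w.1 0)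
  have hstart : dist ((F.F c).1 0) ((F.F v).1 0) ≤ D := hD c v hc0
  have hend : dist ((F.F c).1 d) ((F.F w).1 0) ≤ D := by
    rw [← F.basepoint_geodFlow]
    exact hD (geodFlow d c) w (congrArg c.1 (zero_add d) |>.trans hcd)
  have hlen : dist ((F.F c).1 0) ((F.F c).1 d) = d := by
    rw [hM'.2.1, zero_sub, abs_neg, abs_of_nonneg dist_nonneg]
  calc |d - dist ((F.F v).1 0) ((F.F w).1 0)|
      = dist (dist ((F.F c).1 0) ((F.F c).1 d)) (dist ((F.F v).1 0) ((F.F w).1 0)) := by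
        rw [hlen, Real.dist_eq]
    _ ≤ dist ((F.F c).1 0) ((F.F v).1 0) + dist ((F.F c).1 d) ((F.F w).1 0) :=
        dist_dist_dist_le _ _ _ _
    _ ≤ 2 * D := by linarith

theorem distance_comparison_under_conjugacy_general
    {M M' : Type*} [MetricSpace M] [MetricSpace M']
    (hM : IsHadamardLike M) (hM' : IsHadamardLike M')
    (F : FlowConjugacy M M')
    (D : ℝ)
    (hD : ∀ v w : SphereBundle M, v.1 0 = w.1 0 →
      dist ((F.F v).1 0) ((F.F w).1 0) ≤ D)
    (v w : SphereBundle M) :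
    -(2 * D) ≤ dist (v.1 0) (w.1 0) - dist ((F.F v).1 0) ((F.F w).1 0) ∧
      dist (v.1 0) (w.1 0) - dist ((F.F v).1 0) ((F.F w).1 0) ≤ 2 * D :=
  abs_le.mp (F.abs_dist_sub_dist_le hM hM' hD v w)

/-- Lemma 1 of the paper.  `N` and `N'` are compact nonpositively curved
manifolds of dimension `n ≥ 3` with `C⁰` conjugate geodesic flows; `M`, `M'` are their
universal covers (simply connected, nonpositively curved = Hadamard-like, with cocompact
isometric actions of the common fundamental group `Γ`), and `F` is the lifted uniformly
continuous `Γ`-equivariant conjugacy of geodesic flows.  If `D` bounds the diameters of the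
`F`-images of the unit sphere fibers `S¹ₘM` (measured at the basepoints), then for all
`v w ∈ S¹M`:
`-2D ≤ d_M(b v, b w) - d_{M'}(b (F v), b (F w)) ≤ 2D`. -/
theorem distance_comparison_under_conjugacy
    {Γ M M' : Type*} [Group Γ] [MetricSpace M] [MetricSpace M']
    [MulAction Γ M] [MulAction Γ M'] [IsIsometricSMul Γ M] [IsIsometricSMul Γ M']
    [SimplyConnectedSpace M] [SimplyConnectedSpace M']
    (n : ℕ) (hn : 3 ≤ n)
    (hdim : Nonempty (ChartedSpace (EuclideanSpace ℝ (Fin n)) M) ∧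
      Nonempty (ChartedSpace (EuclideanSpace ℝ (Fin n)) M'))
    (hM : IsHadamardLike M) (hM' : IsHadamardLike M')
    (hco : CocompactAction Γ M) (hco' : CocompactAction Γ M')
    (F : FlowConjugacy M M')
    (hUC : UnifContOnSphere F.F)
    (hequiv : ∀ (g : Γ) (c : SphereBundle M), F.F (gAct g c) = gAct g (F.F c))
    (D : ℝ)
    (hD : ∀ v w : SphereBundle M, v.1 0 = w.1 0 →
      dist ((F.F v).1 0) ((F.F w).1 0) ≤ D)
    (v w : SphereBundle M) :
    -(2 * D) ≤ dist (v.1 0) (w.1 0) - dist ((F.F v).1 0) ((F.F w).1 0) ∧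
      dist (v.1 0) (w.1 0) - dist ((F.F v).1 0) ((F.F w).1 0) ≤ 2 * D :=
  distance_comparison_under_conjugacy_general hM hM' F D hD v w
end

section
/- For any geodesic ν in M, F̃ maps each vertical unit vector V(m) at m ∈ M_ν to a vertical unit vector of M'_{F̃(ν)}; this defines a map G_ν : M_ν → M'_{F̃(ν)} by F̃(V(m)) = V'(G_ν(m)), which satisfies G_ν(τ_t m) = τ'_t(G_ν(m)) for all t (where τ_t, τ'_t denote vertical translation by t in M_ν ≅ X_ν × ℝ and M'_{F̃(ν)} ≅ X'_{F̃(ν)} × ℝ), and hence induces a well-defined map GX_ν : X_ν → X'_{F̃(ν)}. -/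
/-!
Two geodesics parallel to `ν` that pass through the same point at the same time coincide: the
distance between them is a bounded convex function (CAT(0)) with a zero. Hence
`G_ν (c t) := (F c) t` along the verticals `c` is well defined, and it commutes with vertical
translation because `F` commutes with the geodesic flow.

That `F` preserves parallelism comes from cocompactness. At time `t`, the flow and a deck
transformation move `(ν, c)` to a pair of geodesics based in a fixed ball. The space is proper
(Hopf–Rinow, from local compactness and cocompactness), so geodesics based in a ball form a
compact family, and on it the continuous `F` moves basepoints only a bounded amount. Since `F`
commutes with the flow and with the deck group, `dist ((F c) t) ((F ν) t)` is bounded.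
-/

open Metric Set Filter

section Hadamard

variable {M : Type*} [MetricSpace M]

theorem IsMidpointPt.symm {y z m : M} (h : IsMidpointPt y z m) : IsMidpointPt z y m := by
  unfold IsMidpointPt at *
  rw [dist_comm z y, dist_comm z m, dist_comm m y]
  exact h.symm

namespace IsHadamardLike

variable (hM : IsHadamardLike M)
include hM

theorem dist_apply (c : SphereBundle M) (s t : ℝ) : dist (c.1 s) (c.1 t) = |s - t| :=
  hM.2.1 c s t

theorem exists_dist_le_dist_le {x z : M} {a b : ℝ} (ha : 0 ≤ a) (hb : 0 ≤ b)
    (h : dist x z ≤ a + b) : ∃ w, dist x w ≤ a ∧ dist w z ≤ b := by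
  obtain ⟨σ, hσx, hσz⟩ := hM.1 x z
  have hmin : 0 ≤ min (dist x z) a := le_min dist_nonneg ha
  refine ⟨σ.1 (min (dist x z) a), ?_, ?_⟩
  · have h₀ := hM.dist_apply σ 0 (min (dist x z) a)
    rw [hσx, zero_sub, abs_neg, abs_of_nonneg hmin] at h₀
    exact h₀.trans_le (min_le_right _ _)
  · have h₀ := hM.dist_apply σ (min (dist x z) a) (dist x z)
    rw [hσz, abs_sub_comm, abs_of_nonneg (sub_nonneg.2 (min_le_left _ _))] at h₀
    rw [h₀]
    rcases le_total (dist x z) a with h' | h' <;> simp only [h', min_eq_left, min_eq_right] <;>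
      linarith

theorem isMidpointPt_apply (c : SphereBundle M) (s t : ℝ) :
    IsMidpointPt (c.1 s) (c.1 t) (c.1 ((s + t) / 2)) := by
  have key : |s - (s + t) / 2| = |s - t| / 2 ∧ |(s + t) / 2 - t| = |s - t| / 2 := by
    rw [show s - (s + t) / 2 = (s - t) / 2 by ring, show (s + t) / 2 - t = (s - t) / 2 by ring,
      abs_div, abs_two]
    exact ⟨rfl, rfl⟩
  simpa only [IsMidpointPt, hM.dist_apply] using key

theorem exists_isMidpointPt (y z : M) : ∃ m, IsMidpointPt y z m := by
  obtain ⟨c, hy, hz⟩ := hM.1 y z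
  refine ⟨c.1 ((0 + dist y z) / 2), ?_⟩
  simpa only [hy, hz] using hM.isMidpointPt_apply c 0 (dist y z)

/-- The CAT(0) inequality, for `m'` seen from `m` and for `m` seen from `z'`. -/
theorem dist_le_of_isMidpointPt {y z z' m m' : M} (hm : IsMidpointPt y z m)
    (hm' : IsMidpointPt y z' m') : dist m m' ≤ dist z z' / 2 := by
  have h₁ := hM.2.2 m y z' m' hm'
  have h₂ := hM.2.2 z' y z m hm
  unfold CAT0Comparison at h₁ h₂
  rw [dist_comm z' y, dist_comm z' z, dist_comm z' m] at h₂
  rw [dist_comm m y, hm.1] at h₁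
  have hsq : dist m m' ^ 2 ≤ (dist z z' / 2) ^ 2 := by nlinarith
  exact (pow_le_pow_iff_left₀ dist_nonneg (by positivity) two_ne_zero).1 hsq

theorem dist_apply_midpoint_le (a b : SphereBundle M) (s t : ℝ) :
    dist (a.1 ((s + t) / 2)) (b.1 ((s + t) / 2)) ≤
      (dist (a.1 s) (b.1 s) + dist (a.1 t) (b.1 t)) / 2 := by
  obtain ⟨p, hp⟩ := hM.exists_isMidpointPt (a.1 s) (b.1 t)
  have h₁ : dist (a.1 ((s + t) / 2)) p ≤ dist (a.1 t) (b.1 t) / 2 :=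
    hM.dist_le_of_isMidpointPt (hM.isMidpointPt_apply a s t) hp
  have h₂ : dist p (b.1 ((s + t) / 2)) ≤ dist (a.1 s) (b.1 s) / 2 := by
    refine hM.dist_le_of_isMidpointPt hp.symm ?_
    simpa only [add_comm t s] using hM.isMidpointPt_apply b t s
  linarith [dist_triangle (a.1 ((s + t) / 2)) p (b.1 ((s + t) / 2))]

end IsHadamardLike

end Hadamard

/-- Doubling the distance to a zero at least doubles the value. -/
theorem eq_zero_of_midpoint_convex_of_bddAbove {g : ℝ → ℝ} (hg : ∀ u, 0 ≤ g u)
    (hbdd : BddAbove (range g)) (hmid : ∀ s t, g ((s + t) / 2) ≤ (g s + g t) / 2) {t₀ : ℝ}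
    (ht₀ : g t₀ = 0) (u : ℝ) : g u = 0 := by
  obtain ⟨B, hB⟩ := hbdd
  have hgrow : ∀ k : ℕ, 2 ^ k * g u ≤ g (t₀ + 2 ^ k * (u - t₀)) := by
    intro k
    induction k with
    | zero => simp
    | succ k ih =>
      have h := hmid t₀ (t₀ + 2 ^ (k + 1) * (u - t₀))
      rw [show (t₀ + (t₀ + 2 ^ (k + 1) * (u - t₀))) / 2 = t₀ + 2 ^ k * (u - t₀) by ring,
        ht₀] at h
      linarith [show (2 : ℝ) ^ (k + 1) * g u = 2 * (2 ^ k * g u) by ring]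
  by_contra hne
  have hpos : 0 < g u := (hg u).lt_of_ne' hne
  obtain ⟨k, hk⟩ := pow_unbounded_of_one_lt (B / g u) one_lt_two
  rw [div_lt_iff₀ hpos] at hk
  linarith [hgrow k, hB (mem_range_self (t₀ + 2 ^ k * (u - t₀)))]

section Parallel

variable {M : Type*} [MetricSpace M] {ν a b : SphereBundle M}

theorem ParallelTo.bddAbove_dist (ha : ParallelTo ν a) (hb : ParallelTo ν b) :
    BddAbove (range fun t => dist (a.1 t) (b.1 t)) := by
  obtain ⟨Ca, hCa⟩ := ha
  obtain ⟨Cb, hCb⟩ := hb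
  refine ⟨Ca + Cb, forall_mem_range.2 fun t => ?_⟩
  linarith [dist_triangle_right (a.1 t) (b.1 t) (ν.1 t), hCa t, hCb t]

theorem ParallelTo.geodFlow_right (hM : IsHadamardLike M) (ha : ParallelTo ν a) (α : ℝ) :
    ParallelTo ν (geodFlow α a) := by
  obtain ⟨C, hC⟩ := ha
  refine ⟨C + |α|, fun t => ?_⟩
  have hν : dist (ν.1 (t + α)) (ν.1 t) = |α| := by rw [hM.dist_apply, add_sub_cancel_left]
  change dist (a.1 (t + α)) (ν.1 t) ≤ C + |α|
  linarith [dist_triangle (a.1 (t + α)) (ν.1 (t + α)) (ν.1 t), hC (t + α)]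

theorem ParallelTo.eq_of_apply_eq (hM : IsHadamardLike M) (ha : ParallelTo ν a)
    (hb : ParallelTo ν b) {t₀ : ℝ} (h : a.1 t₀ = b.1 t₀) : a = b := by
  have hdist : ∀ u, dist (a.1 u) (b.1 u) = 0 :=
    eq_zero_of_midpoint_convex_of_bddAbove (fun _ => dist_nonneg) (ha.bddAbove_dist hb)
      (hM.dist_apply_midpoint_le a b) (by rw [h, dist_self])
  exact Subtype.ext (funext fun u => dist_eq_zero.1 (hdist u))

end Parallel

section Cocompact

variable {Γ M : Type*} [Group Γ] [MulAction Γ M]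

theorem exists_smul_mem_of_iUnion_image_eq_univ {K : Set M}
    (hK : ⋃ g : Γ, (fun m => g • m) '' K = univ) (y : M) : ∃ g : Γ, g • y ∈ K := by
  obtain ⟨g, k, hk, rfl⟩ := mem_iUnion.1 (hK.symm ▸ mem_univ y)
  exact ⟨g⁻¹, by rwa [inv_smul_smul]⟩

/-- Take a Lebesgue number of a cover of `K` by compact balls, then translate. -/
theorem CocompactAction.exists_pos_forall_isCompact_closedBall [MetricSpace M]
    [IsIsometricSMul Γ M] [WeaklyLocallyCompactSpace M] (hco : CocompactAction Γ M) :
    ∃ r > 0, ∀ y : M, IsCompact (closedBall y r) := by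
  obtain ⟨K, hKc, hKu⟩ := hco
  choose ρ hρ hρc using fun x : M => exists_isCompact_closedBall x
  obtain ⟨δ, hδ, hleb⟩ :=
    lebesgue_number_lemma_of_metric hKc (fun x : M => isOpen_ball (ε := ρ x))
      fun k _ => mem_iUnion.2 ⟨k, mem_ball_self (hρ k)⟩
  refine ⟨δ / 2, half_pos hδ, fun y => ?_⟩
  obtain ⟨g, hg⟩ := exists_smul_mem_of_iUnion_image_eq_univ hKu y
  obtain ⟨x, hx⟩ := hleb _ hg
  have hcpt : IsCompact (closedBall (g • y) (δ / 2)) :=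
    (hρc x).of_isClosed_subset isClosed_closedBall
      ((closedBall_subset_ball (half_lt_self hδ)).trans (hx.trans ball_subset_closedBall))
  simpa only [Metric.smul_closedBall, inv_smul_smul] using hcpt.smul g⁻¹

end Cocompact

section Proper

variable {M : Type*} [MetricSpace M] {r : ℝ}

theorem IsHadamardLike.isCompact_closedBall_add_half (hM : IsHadamardLike M) (hr : 0 < r)
    (hcpt : ∀ y : M, IsCompact (closedBall y r)) {x : M} {ρ : ℝ} (hρ : 0 ≤ ρ)
    (hx : IsCompact (closedBall x ρ)) : IsCompact (closedBall x (ρ + r / 2)) := by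
  obtain ⟨t, -, htfin, hcov⟩ := finite_cover_balls_of_compact hx (half_pos hr)
  refine (htfin.isCompact_biUnion fun y _ => hcpt y).of_isClosed_subset isClosed_closedBall
    fun z hz => ?_
  obtain ⟨w, hxw, hwz⟩ :=
    hM.exists_dist_le_dist_le hρ (half_pos hr).le (by rwa [dist_comm, ← mem_closedBall])
  obtain ⟨y, hy, hwy⟩ := mem_iUnion₂.1 (hcov (mem_closedBall'.2 hxw))
  refine mem_iUnion₂.2 ⟨y, hy, mem_closedBall.2 ?_⟩
  linarith [dist_triangle z w y, dist_comm w z, mem_ball.1 hwy]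

theorem IsHadamardLike.properSpace (hM : IsHadamardLike M) (hr : 0 < r)
    (hcpt : ∀ y : M, IsCompact (closedBall y r)) : ProperSpace M := by
  rcases isEmpty_or_nonempty M with hempty | ⟨⟨x⟩⟩
  · infer_instance
  refine ProperSpace.of_seq_closedBall (x := x) (l := atTop) (r := fun k : ℕ => k * (r / 2))
    (tendsto_natCast_atTop_atTop.atTop_mul_const (half_pos hr)) (Eventually.of_forall fun k => ?_)
  induction k with
  | zero => simp
  | succ k ih =>
    rw [Nat.cast_succ, add_one_mul]
    exact hM.isCompact_closedBall_add_half hr hcpt (by positivity) ih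

end Proper

theorem IsHadamardLike.isCompact_setOf_dist_apply_zero_le {M : Type*} [MetricSpace M]
    [ProperSpace M] (hM : IsHadamardLike M) (x₀ : M) (R : ℝ) :
    IsCompact {c : SphereBundle M | dist (c.1 0) x₀ ≤ R} := by
  set T : Set (ℝ → M) := {f | (∀ s t, dist (f s) (f t) = |s - t|) ∧ dist (f 0) x₀ ≤ R}
  have hT : IsCompact T := by
    refine (isCompact_univ_pi fun t => isCompact_closedBall x₀ (R + |t|)).of_isClosed_subset
      ?_ ?_
    · simp only [T, ofPred_and, ofPred_forall]
      exact (isClosed_iInter fun s => isClosed_iInter fun t =>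
        isClosed_eq (by fun_prop) continuous_const).inter
          (isClosed_le (by fun_prop) continuous_const)
    · rintro f ⟨hf, hf0⟩ t -
      have := hf t 0
      rw [sub_zero] at this
      exact mem_closedBall.2 (by linarith [dist_triangle (f t) (f 0) x₀])
  have himage : Subtype.val '' {c : SphereBundle M | dist (c.1 0) x₀ ≤ R} = T := by
    ext f
    constructor
    · rintro ⟨c, hc, rfl⟩
      exact ⟨hM.dist_apply c, hc⟩
    · rintro ⟨hf, hf0⟩
      exact ⟨⟨f, 1, one_pos, fun s t _ => hf s t⟩, hf0, rfl⟩
  exact Subtype.isCompact_iff (p := IsUnitGeodesic).2 (himage ▸ hT)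

section Conjugacy

variable {Γ M M' : Type*} [Group Γ] [MetricSpace M] [MetricSpace M']

theorem ParallelTo.map [MulAction Γ M] [MulAction Γ M'] [IsIsometricSMul Γ M]
    [IsIsometricSMul Γ M'] [ProperSpace M] (hM : IsHadamardLike M) (hco : CocompactAction Γ M)
    (F : FlowConjugacy M M')
    (hequiv : ∀ (g : Γ) (c : SphereBundle M), F.F (gAct g c) = gAct g (F.F c))
    {ν c : SphereBundle M} (hc : ParallelTo ν c) : ParallelTo (F.F ν) (F.F c) := by
  obtain ⟨K, hKc, hKu⟩ := hco
  obtain ⟨C, hC⟩ := hc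
  obtain ⟨R, hR⟩ := hKc.isBounded.subset_closedBall (ν.1 0)
  have hbase : Continuous fun a : SphereBundle M' => a.1 0 :=
    (continuous_apply 0).comp continuous_subtype_val
  set S : Set (SphereBundle M) := {a | dist (a.1 0) (ν.1 0) ≤ R + C}
  obtain ⟨D, hD⟩ := isBounded_iff.1
    ((hM.isCompact_setOf_dist_apply_zero_le (ν.1 0) (R + C)).image
      (hbase.comp F.continuous)).isBounded
  refine ⟨D, fun t => ?_⟩
  obtain ⟨g, hg⟩ := exists_smul_mem_of_iUnion_image_eq_univ hKu (ν.1 t)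
  have hνK : dist (g • ν.1 t) (ν.1 0) ≤ R := hR hg
  have hν : gAct g (geodFlow t ν) ∈ S := by
    change dist (g • ν.1 (0 + t)) (ν.1 0) ≤ R + C
    rw [zero_add]
    linarith [dist_nonneg.trans (hC 0)]
  have hc : gAct g (geodFlow t c) ∈ S := by
    change dist (g • c.1 (0 + t)) (ν.1 0) ≤ R + C
    rw [zero_add]
    linarith [dist_triangle (g • c.1 t) (g • ν.1 t) (ν.1 0), dist_smul g (c.1 t) (ν.1 t),
      hC t]
  have h := hD (mem_image_of_mem _ hc) (mem_image_of_mem _ hν)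
  simp only [Function.comp_apply, hequiv, F.conj] at h
  change dist (g • (F.F c).1 (0 + t)) (g • (F.F ν).1 (0 + t)) ≤ D at h
  rwa [zero_add, dist_smul] at h

open Classical in
/-- The map `G_ν`, sending `c t` to `(F c) t` for `c` parallel to `ν`; its value off `M_ν` is
arbitrary. -/
noncomputable def FlowConjugacy.verticalMap (F : FlowConjugacy M M') (ν : SphereBundle M)
    (x : M) : M' :=
  if h : ∃ p : SphereBundle M × ℝ, ParallelTo ν p.1 ∧ p.1.1 p.2 = x then
    (F.F h.choose.1).1 h.choose.2
  else (F.F ν).1 0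

theorem FlowConjugacy.verticalMap_apply (hM : IsHadamardLike M) (F : FlowConjugacy M M')
    {ν c : SphereBundle M} (hc : ParallelTo ν c) (t : ℝ) :
    F.verticalMap ν (c.1 t) = (F.F c).1 t := by
  have hex : ∃ p : SphereBundle M × ℝ, ParallelTo ν p.1 ∧ p.1.1 p.2 = c.1 t :=
    ⟨(c, t), hc, rfl⟩
  rw [verticalMap, dif_pos hex]
  obtain ⟨hpar, happ⟩ := hex.choose_spec
  generalize hex.choose = q at hpar happ ⊢
  have hflow : geodFlow (q.2 - t) q.1 = c :=
    (hpar.geodFlow_right hM _).eq_of_apply_eq hM hc (t₀ := t) (by simpa [geodFlow] using happ)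
  rw [← hflow, F.conj]
  simp [geodFlow]

end Conjugacy

theorem conjugacy_induces_map_on_Mnu_general
    {Γ M M' : Type*} [Group Γ] [MetricSpace M] [MetricSpace M']
    [MulAction Γ M] [MulAction Γ M'] [IsIsometricSMul Γ M] [IsIsometricSMul Γ M']
    (n : ℕ)
    (hdim : Nonempty (ChartedSpace (EuclideanSpace ℝ (Fin n)) M) ∧
      Nonempty (ChartedSpace (EuclideanSpace ℝ (Fin n)) M'))
    (hM : IsHadamardLike M)
    (hco : CocompactAction Γ M)
    (F : FlowConjugacy M M')
    (hequiv : ∀ (g : Γ) (c : SphereBundle M), F.F (gAct g c) = gAct g (F.F c))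
    (ν : SphereBundle M) :
    (∀ c : SphereBundle M, ParallelTo ν c → ParallelTo (F.F ν) (F.F c)) ∧
    ∃ G : M → M',
      Set.MapsTo G (MSet ν) (MSet (F.F ν)) ∧
      (∀ c : SphereBundle M, ParallelTo ν c →
        (F.F c).1 0 = G (c.1 0) ∧ ∀ t : ℝ, (F.F c).1 t = G (c.1 t)) ∧
      (∀ m ∈ MSet ν, ∀ m' ∈ MSet ν,
        (∃ c : SphereBundle M, ParallelTo ν c ∧ m ∈ Set.range c.1 ∧ m' ∈ Set.range c.1) →
        ∃ c' : SphereBundle M', ParallelTo (F.F ν) c' ∧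
          G m ∈ Set.range c'.1 ∧ G m' ∈ Set.range c'.1) := by
  obtain ⟨⟨chart⟩, -⟩ := hdim
  have := ChartedSpace.locallyCompactSpace (EuclideanSpace ℝ (Fin n)) M
  obtain ⟨r, hr, hcpt⟩ := hco.exists_pos_forall_isCompact_closedBall
  have := hM.properSpace hr hcpt
  have hpar : ∀ c, ParallelTo ν c → ParallelTo (F.F ν) (F.F c) :=
    fun c hc => hc.map hM hco F hequiv
  have hG : ∀ c, ParallelTo ν c → ∀ t, (F.F c).1 t = F.verticalMap ν (c.1 t) :=
    fun c hc t => (F.verticalMap_apply hM hc t).symm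
  refine ⟨hpar, F.verticalMap ν, ?_, fun c hc => ⟨hG c hc 0, hG c hc⟩, ?_⟩
  · rintro _ ⟨c, hc, t, rfl⟩
    exact ⟨F.F c, hpar c hc, t, hG c hc t⟩
  · rintro _ - _ - ⟨c, hc, ⟨s, rfl⟩, ⟨s', rfl⟩⟩
    exact ⟨F.F c, hpar c hc, ⟨s, hG c hc s⟩, ⟨s', hG c hc s'⟩⟩

/-- In the lifted conjugacy setting, for any geodesic `ν` in `M`:
`F` takes each vertical geodesic of `M_ν` (i.e. each geodesic parallel to `ν`) to a vertical
geodesic of `M'_{F ν}`; consequently there is a map `G_ν : M_ν → M'_{F ν}` defined by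
`F(V(m)) = V'(G_ν m)`, it commutes with the vertical translations (`G_ν (τ_t m) = τ'_t (G_ν m)`,
expressed by `(F c)(t) = G (c t)` along verticals `c`), and it takes vertical lines to
vertical lines, hence induces a well-defined map `GX_ν : X_ν → X'_{F ν}` on the spaces of
verticals. -/
theorem conjugacy_induces_map_on_Mnu
    {Γ M M' : Type*} [Group Γ] [MetricSpace M] [MetricSpace M']
    [MulAction Γ M] [MulAction Γ M'] [IsIsometricSMul Γ M] [IsIsometricSMul Γ M']
    [SimplyConnectedSpace M] [SimplyConnectedSpace M']
    (n : ℕ) (hn : 3 ≤ n)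
    (hdim : Nonempty (ChartedSpace (EuclideanSpace ℝ (Fin n)) M) ∧
      Nonempty (ChartedSpace (EuclideanSpace ℝ (Fin n)) M'))
    (hM : IsHadamardLike M) (hM' : IsHadamardLike M')
    (hco : CocompactAction Γ M) (hco' : CocompactAction Γ M')
    (F : FlowConjugacy M M')
    (hUC : UnifContOnSphere F.F)
    (hequiv : ∀ (g : Γ) (c : SphereBundle M), F.F (gAct g c) = gAct g (F.F c))
    (ν : SphereBundle M) :
    (∀ c : SphereBundle M, ParallelTo ν c → ParallelTo (F.F ν) (F.F c)) ∧
    ∃ G : M → M',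
      Set.MapsTo G (MSet ν) (MSet (F.F ν)) ∧
      (∀ c : SphereBundle M, ParallelTo ν c →
        (F.F c).1 0 = G (c.1 0) ∧ ∀ t : ℝ, (F.F c).1 t = G (c.1 t)) ∧
      (∀ m ∈ MSet ν, ∀ m' ∈ MSet ν,
        (∃ c : SphereBundle M, ParallelTo ν c ∧ m ∈ Set.range c.1 ∧ m' ∈ Set.range c.1) →
        ∃ c' : SphereBundle M', ParallelTo (F.F ν) c' ∧
          G m ∈ Set.range c'.1 ∧ G m' ∈ Set.range c'.1) :=
  conjugacy_induces_map_on_Mnu_general n hdim hM hco F hequiv ν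
end

section
/- For every geodesic ν in M and every x ∈ M_ν, |B_ν(x) − B_{F̃(ν)}(G_ν(x))| ≤ 2D(F), where B_ν(x) := lim_{t→∞}(t − d(x, ν(t))) is the Busemann function of ν and B_{F̃(ν)} that of F̃(ν). -/
open Metric Set Filter

/-!
Join `c 0` to `ν t` by a geodesic `σ` of length `d = dist (c 0) (ν t)`. Since `F` conjugates
the flows, `F σ` starts within `D` of `F c 0` and reaches, at time `d`, a point within `D` of
`F ν t`; as geodesics of `M'` are minimizing, `F σ` joins its endpoints at distance exactly `d`.
Hence `t - dist (c 0) (ν t)` and `t - dist (F c 0) (F ν t)` differ by at most `2 D` for every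
`t`, and the bound passes to the limits.
-/

namespace FlowConjugacy

variable {M M' : Type*} [MetricSpace M] [MetricSpace M'] (F : FlowConjugacy M M')

theorem apply_geodFlow (t s : ℝ) (c : SphereBundle M) :
    (F.F (geodFlow t c)).1 s = (F.F c).1 (s + t) := by
  rw [F.conj]
  rfl

variable {D : ℝ}
  (hD : ∀ v w : SphereBundle M, v.1 0 = w.1 0 → dist ((F.F v).1 0) ((F.F w).1 0) ≤ D)
include hD

theorem dist_apply_le_of_apply_eq {v w : SphereBundle M} {a b : ℝ} (h : v.1 a = w.1 b) :
    dist ((F.F v).1 a) ((F.F w).1 b) ≤ D := by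
  simpa only [F.apply_geodFlow, zero_add] using
    hD (geodFlow a v) (geodFlow b w) (by simpa only [geodFlow, zero_add] using h)

theorem abs_dist_sub_dist_le_s5
    (hgeod : ∀ x y : M, ∃ σ : SphereBundle M, σ.1 0 = x ∧ σ.1 (dist x y) = y)
    (hmin : ∀ σ : SphereBundle M', ∀ s t : ℝ, dist (σ.1 s) (σ.1 t) = |s - t|)
    (c ν : SphereBundle M) (s t : ℝ) :
    |dist ((F.F c).1 s) ((F.F ν).1 t) - dist (c.1 s) (ν.1 t)| ≤ 2 * D := by
  set d := dist (c.1 s) (ν.1 t)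
  obtain ⟨σ, hσ₀, hσd⟩ := hgeod (c.1 s) (ν.1 t)
  have hFσ : dist ((F.F σ).1 0) ((F.F σ).1 d) = d := by
    rw [hmin, zero_sub, abs_neg, abs_of_nonneg dist_nonneg]
  have hstart := F.dist_apply_le_of_apply_eq hD hσ₀
  have hend := F.dist_apply_le_of_apply_eq hD hσd
  calc |dist ((F.F c).1 s) ((F.F ν).1 t) - d|
      = dist (dist ((F.F c).1 s) ((F.F ν).1 t)) (dist ((F.F σ).1 0) ((F.F σ).1 d)) := by
        rw [hFσ, Real.dist_eq]
    _ ≤ dist ((F.F c).1 s) ((F.F σ).1 0) + dist ((F.F ν).1 t) ((F.F σ).1 d) :=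
        dist_dist_dist_le _ _ _ _
    _ ≤ 2 * D := by rw [dist_comm, dist_comm ((F.F ν).1 t)]; linarith

end FlowConjugacy

theorem busemann_comparison_general
    {M M' : Type*} [MetricSpace M] [MetricSpace M']
    (hM : IsHadamardLike M) (hM' : IsHadamardLike M')
    (F : FlowConjugacy M M')
    (D : ℝ)
    (hD : ∀ v w : SphereBundle M, v.1 0 = w.1 0 →
      dist ((F.F v).1 0) ((F.F w).1 0) ≤ D)
    (ν c : SphereBundle M)
    (b b' : ℝ)
    (hb : Tendsto (fun t : ℝ => t - dist (c.1 0) (ν.1 t)) atTop (nhds b))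
    (hb' : Tendsto (fun t : ℝ => t - dist ((F.F c).1 0) ((F.F ν).1 t)) atTop (nhds b')) :
    |b - b'| ≤ 2 * D := by
  have hbound : ∀ t : ℝ,
      |(t - dist (c.1 0) (ν.1 t)) - (t - dist ((F.F c).1 0) ((F.F ν).1 t))| ≤ 2 * D := by
    intro t
    rw [sub_sub_sub_cancel_left]
    exact F.abs_dist_sub_dist_le_s5 hD hM.1 hM'.2.1 c ν 0 t
  exact le_of_tendsto (hb.sub hb').abs (Eventually.of_forall hbound)

/-- In the lifted conjugacy setting, with `D` bounding the (basepoint)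
diameters of the `F`-images of unit sphere fibers: for every geodesic `ν` of `M` and every
point `x ∈ M_ν` (written as `x = c 0` for a vertical geodesic `c` parallel to `ν`, so that
`G_ν x = (F c) 0`), the Busemann functions `B_ν(x) = lim_{t→∞} (t - d(x, ν t))` and
`B_{F ν}(G_ν x)` differ by at most `2 D`. -/
theorem busemann_comparison
    {Γ M M' : Type*} [Group Γ] [MetricSpace M] [MetricSpace M']
    [MulAction Γ M] [MulAction Γ M'] [IsIsometricSMul Γ M] [IsIsometricSMul Γ M']
    [SimplyConnectedSpace M] [SimplyConnectedSpace M']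
    (n : ℕ) (hn : 3 ≤ n)
    (hdim : Nonempty (ChartedSpace (EuclideanSpace ℝ (Fin n)) M) ∧
      Nonempty (ChartedSpace (EuclideanSpace ℝ (Fin n)) M'))
    (hM : IsHadamardLike M) (hM' : IsHadamardLike M')
    (hco : CocompactAction Γ M) (hco' : CocompactAction Γ M')
    (F : FlowConjugacy M M')
    (hUC : UnifContOnSphere F.F)
    (hequiv : ∀ (g : Γ) (c : SphereBundle M), F.F (gAct g c) = gAct g (F.F c))
    (D : ℝ)
    (hD : ∀ v w : SphereBundle M, v.1 0 = w.1 0 →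
      dist ((F.F v).1 0) ((F.F w).1 0) ≤ D)
    (ν c : SphereBundle M) (hc : ParallelTo ν c)
    (b b' : ℝ)
    (hb : Tendsto (fun t : ℝ => t - dist (c.1 0) (ν.1 t)) atTop (nhds b))
    (hb' : Tendsto (fun t : ℝ => t - dist ((F.F c).1 0) ((F.F ν).1 t)) atTop (nhds b')) :
    |b - b'| ≤ 2 * D :=
  busemann_comparison_general hM hM' F D hD ν c b b' hb hb'
end
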